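/- arXiv:1403.7491 — 4 statements merged into one kernel-verified Lean document; each statement's English description precedes it below -/
import Mathlib

section
/- For all x, y ∈ (-1,1) with x ≠ y, the partial derivatives of the Green function G are given by ∂G/∂x (x,y) = (1/π) · (√(1-y²)/√(1-x²)) · 1/(y-x) and ∂G/∂y (x,y) = (1/π) · (√(1-x²)/√(1-y²)) · 1/(x-y). -/
/-!
Away from the diagonal, `G t y = π⁻¹ (log N(t) - log (t - y))` with
`N(t) = 1 - t y + √(1 - t²) √(1 - y²)` (recall `Real.log |z| = Real.log z`), so `∂G/∂x` is
`π⁻¹ (N'(x) / N(x) - 1 / (x - y))`, which collapses to the claimed formula using only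
`(√(1 - x²))² = 1 - x²` and `(√(1 - y²))² = 1 - y²`. The derivative in `y` follows by symmetry.
-/

noncomputable def G (x y : ℝ) : ℝ :=
  if x ∈ Set.Ioo (-1:ℝ) 1 ∧ y ∈ Set.Ioo (-1:ℝ) 1 then
    (1 / Real.pi) * Real.log ((1 - x*y + Real.sqrt ((1 - x^2) * (1 - y^2))) / |x - y|)
  else 0

open Real Set Filter Topology

lemma G_comm (x y : ℝ) : G x y = G y x := by
  simp only [G, and_comm, abs_sub_comm x y, mul_comm x y, mul_comm (1 - x ^ 2)]

lemma one_sub_sq_pos_of_mem_Ioo {x : ℝ} (hx : x ∈ Ioo (-1 : ℝ) 1) : 0 < 1 - x ^ 2 := by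
  nlinarith [hx.1, hx.2]

lemma one_sub_mul_pos_of_mem_Ioo {x y : ℝ} (hx : x ∈ Ioo (-1 : ℝ) 1)
    (hy : y ∈ Ioo (-1 : ℝ) 1) : 0 < 1 - x * y := by
  nlinarith [mul_pos (sub_pos.2 hx.2) (neg_lt_iff_pos_add'.1 hy.1),
    mul_pos (neg_lt_iff_pos_add'.1 hx.1) (sub_pos.2 hy.2)]

lemma G_eq_log_sub_log {x y : ℝ} (hx : x ∈ Ioo (-1 : ℝ) 1) (hy : y ∈ Ioo (-1 : ℝ) 1)
    (hxy : x ≠ y) :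
    G x y = (1 / π) * (log (1 - x * y + √(1 - x ^ 2) * √(1 - y ^ 2)) - log (x - y)) := by
  have hN : 0 < 1 - x * y + √(1 - x ^ 2) * √(1 - y ^ 2) := by
    have := one_sub_mul_pos_of_mem_Ioo hx hy
    positivity
  rw [G, if_pos ⟨hx, hy⟩, sqrt_mul (one_sub_sq_pos_of_mem_Ioo hx).le,
    log_div hN.ne' (abs_pos.2 (sub_ne_zero.2 hxy)).ne', log_abs]

lemma hasDerivAt_sqrt_one_sub_sq {x : ℝ} (hx : x ∈ Ioo (-1 : ℝ) 1) :
    HasDerivAt (fun t => √(1 - t ^ 2)) (-x / √(1 - x ^ 2)) x := by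
  have hx2 := one_sub_sq_pos_of_mem_Ioo hx
  convert ((hasDerivAt_pow 2 x).const_sub 1).sqrt hx2.ne' using 1
  field_simp
  ring

lemma hasDerivAt_G_left {x y : ℝ} (hx : x ∈ Ioo (-1 : ℝ) 1) (hy : y ∈ Ioo (-1 : ℝ) 1)
    (hxy : x ≠ y) :
    HasDerivAt (fun t => G t y) ((1 / π) * (√(1 - y ^ 2) / √(1 - x ^ 2)) * (1 / (y - x))) x := by
  set a := √(1 - x ^ 2) with ha_def
  set b := √(1 - y ^ 2)
  have ha : 0 < a := sqrt_pos.2 (one_sub_sq_pos_of_mem_Ioo hx)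
  have ha2 : a ^ 2 = 1 - x ^ 2 := sq_sqrt (one_sub_sq_pos_of_mem_Ioo hx).le
  have hb2 : b ^ 2 = 1 - y ^ 2 := sq_sqrt (one_sub_sq_pos_of_mem_Ioo hy).le
  have hN : 0 < 1 - x * y + a * b := by
    have := one_sub_mul_pos_of_mem_Ioo hx hy
    positivity
  have hsub : x - y ≠ 0 := sub_ne_zero.2 hxy
  have hG : (fun t => G t y) =ᶠ[𝓝 x]
      fun t => (1 / π) * (log (1 - t * y + √(1 - t ^ 2) * b) - log (t - y)) := by
    filter_upwards [isOpen_Ioo.mem_nhds hx, isOpen_ne.mem_nhds hxy] with t ht hty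
    exact G_eq_log_sub_log ht hy hty
  have hderiv := ((((hasDerivAt_id x).mul_const y).const_sub 1).add
    ((hasDerivAt_sqrt_one_sub_sq hx).mul_const b) |>.log hN.ne' |>.sub
    (((hasDerivAt_id x).sub_const y).log hsub)).const_mul (1 / π)
  refine (hderiv.congr_of_eventuallyEq hG).congr_deriv ?_
  rw [mul_comm x y] at hN
  simp only [id, Pi.add_apply]
  rw [← ha_def]
  field_simp
  linear_combination (y - x) * a * hb2 - (y - x) * b * ha2

theorem stmt_0 (x y : ℝ) (hx : x ∈ Set.Ioo (-1:ℝ) 1) (hy : y ∈ Set.Ioo (-1:ℝ) 1)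
    (hxy : x ≠ y) :
    HasDerivAt (fun t => G t y)
      ((1 / Real.pi) * (Real.sqrt (1 - y^2) / Real.sqrt (1 - x^2)) * (1 / (y - x))) x ∧
    HasDerivAt (fun t => G x t)
      ((1 / Real.pi) * (Real.sqrt (1 - x^2) / Real.sqrt (1 - y^2)) * (1 / (x - y))) y := by
  refine ⟨hasDerivAt_G_left hx hy hxy, ?_⟩
  simpa only [G_comm _ x] using hasDerivAt_G_left hy hx hxy.symm
end

section
/- Let b > -3/2 and let f : (-1,1) → ℝ be a measurable function satisfying |f(x)| ≤ C·(1-x²)^b for all x ∈ (-1,1) and some constant C > 0. Then for every x ∈ (-1,1) the integral u(x) = ∫_{-1}^{1} G(x,y)·f(y) dy is absolutely convergent, and the function u is continuous on (-1,1). -/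
open Set MeasureTheory Real Filter Topology

noncomputable def greenNumerator (x y : ℝ) : ℝ := 1 - x * y + √((1 - x ^ 2) * (1 - y ^ 2))

section greenNumerator

variable {x y : ℝ}

lemma abs_sub_le_greenNumerator (hx : x ∈ Ioo (-1) 1) (hy : y ∈ Ioo (-1) 1) :
    |x - y| ≤ greenNumerator x y := by
  obtain ⟨hx₁, hx₂⟩ := hx
  obtain ⟨hy₁, hy₂⟩ := hy
  have : |x - y| ≤ 1 - x * y := abs_le.2 ⟨by nlinarith, by nlinarith⟩
  unfold greenNumerator
  linarith [sqrt_nonneg ((1 - x ^ 2) * (1 - y ^ 2))]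

lemma greenNumerator_pos (hx : x ∈ Ioo (-1) 1) (hy : y ∈ Ioo (-1) 1) :
    0 < greenNumerator x y := by
  obtain ⟨hx₁, hx₂⟩ := hx
  obtain ⟨hy₁, hy₂⟩ := hy
  unfold greenNumerator
  nlinarith [sqrt_nonneg ((1 - x ^ 2) * (1 - y ^ 2))]

lemma greenNumerator_le_three (hx : x ∈ Ioo (-1) 1) (hy : y ∈ Ioo (-1) 1) :
    greenNumerator x y ≤ 3 := by
  obtain ⟨hx₁, hx₂⟩ := hx
  obtain ⟨hy₁, hy₂⟩ := hy
  have : √((1 - x ^ 2) * (1 - y ^ 2)) ≤ 1 :=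
    sqrt_le_one.2 (mul_le_one₀ (by nlinarith) (by nlinarith) (by nlinarith))
  unfold greenNumerator
  nlinarith

lemma greenNumerator_sub_abs_le (hx : x ∈ Ioo (-1) 1) (hy : y ∈ Ioo (-1) 1) :
    greenNumerator x y - |x - y| ≤ 3 * √(1 - y ^ 2) := by
  obtain ⟨hx₁, hx₂⟩ := hx
  obtain ⟨hy₁, hy₂⟩ := hy
  have hy₀ : 0 ≤ 1 - y ^ 2 := by nlinarith
  have hmixed : √((1 - x ^ 2) * (1 - y ^ 2)) ≤ √(1 - y ^ 2) :=
    sqrt_le_sqrt (by nlinarith)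
  have hsq : 1 - y ^ 2 ≤ √(1 - y ^ 2) := by
    nlinarith [sq_sqrt hy₀, sqrt_nonneg (1 - y ^ 2),
      sqrt_le_one.2 (show 1 - y ^ 2 ≤ 1 by nlinarith)]
  have hlin : 1 - x * y - |x - y| ≤ 2 * (1 - y ^ 2) := by
    rcases le_total x y with h | h
    · rw [abs_of_nonpos (by linarith)]; nlinarith
    · rw [abs_of_nonneg (by linarith)]; nlinarith
  unfold greenNumerator
  linarith

end greenNumerator

section G

variable {x y : ℝ}

lemma G_of_mem (hx : x ∈ Ioo (-1) 1) (hy : y ∈ Ioo (-1) 1) :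
    G x y = log (greenNumerator x y / |x - y|) / π := by
  rw [G, if_pos ⟨hx, hy⟩, greenNumerator, one_div_mul_eq_div]

lemma G_of_notMem (h : ¬(x ∈ Ioo (-1) 1 ∧ y ∈ Ioo (-1) 1)) : G x y = 0 :=
  if_neg h

lemma G_self (x : ℝ) : G x x = 0 := by
  by_cases hx : x ∈ Ioo (-1) 1
  · simp [G_of_mem hx hx]
  · exact G_of_notMem fun h => hx h.1

lemma G_nonneg (x y : ℝ) : 0 ≤ G x y := by
  by_cases h : x ∈ Ioo (-1) 1 ∧ y ∈ Ioo (-1) 1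
  · obtain rfl | hxy := eq_or_ne x y
    · exact (G_self x).ge
    rw [G_of_mem h.1 h.2]
    have hd : 0 < |x - y| := abs_pos.2 (sub_ne_zero.2 hxy)
    exact div_nonneg (log_nonneg ((one_le_div hd).2 (abs_sub_le_greenNumerator h.1 h.2)))
      pi_pos.le
  · exact (G_of_notMem h).ge

lemma G_le_log_three_add_rpow (x y : ℝ) :
    G x y ≤ (log 3 + 2 * |x - y| ^ (-(1 / 2) : ℝ)) / π := by
  have hrhs : 0 ≤ (log 3 + 2 * |x - y| ^ (-(1 / 2) : ℝ)) / π := by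
    have := log_nonneg (show (1 : ℝ) ≤ 3 by norm_num)
    positivity
  by_cases h : x ∈ Ioo (-1) 1 ∧ y ∈ Ioo (-1) 1
  · obtain rfl | hxy := eq_or_ne x y
    · exact (G_self x).trans_le hrhs
    have hd : 0 < |x - y| := abs_pos.2 (sub_ne_zero.2 hxy)
    have hN := greenNumerator_pos h.1 h.2
    rw [G_of_mem h.1 h.2, log_div hN.ne' hd.ne']
    gcongr
    have hnum : log (greenNumerator x y) ≤ log 3 := log_le_log hN (greenNumerator_le_three h.1 h.2)
    -- `-log t = log t⁻¹ ≤ 2 (t⁻¹) ^ (1/2)`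
    have hden : -log |x - y| ≤ 2 * |x - y| ^ (-(1 / 2) : ℝ) := by
      have := log_le_rpow_div (inv_nonneg.2 hd.le) (show (0 : ℝ) < 1 / 2 by norm_num)
      rw [log_inv, inv_rpow hd.le, ← rpow_neg hd.le] at this
      linarith
    linarith
  · exact (G_of_notMem h).trans_le hrhs

lemma G_le_sqrt_div (x y : ℝ) : G x y ≤ 3 / π * √(1 - y ^ 2) / |x - y| := by
  have hrhs : 0 ≤ 3 / π * √(1 - y ^ 2) / |x - y| := by positivity
  by_cases h : x ∈ Ioo (-1) 1 ∧ y ∈ Ioo (-1) 1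
  · obtain rfl | hxy := eq_or_ne x y
    · exact (G_self x).trans_le hrhs
    have hd : 0 < |x - y| := abs_pos.2 (sub_ne_zero.2 hxy)
    have hN := greenNumerator_pos h.1 h.2
    have hlog : log (greenNumerator x y / |x - y|) ≤ 3 * √(1 - y ^ 2) / |x - y| :=
      calc log (greenNumerator x y / |x - y|)
          ≤ greenNumerator x y / |x - y| - 1 := log_le_sub_one_of_pos (div_pos hN hd)
        _ = (greenNumerator x y - |x - y|) / |x - y| := by field_simp
        _ ≤ 3 * √(1 - y ^ 2) / |x - y| := by
          gcongr; exact greenNumerator_sub_abs_le h.1 h.2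
    rw [G_of_mem h.1 h.2]
    calc log (greenNumerator x y / |x - y|) / π ≤ 3 * √(1 - y ^ 2) / |x - y| / π := by
          gcongr
      _ = 3 / π * √(1 - y ^ 2) / |x - y| := by ring
  · exact (G_of_notMem h).trans_le hrhs

lemma measurable_G (x : ℝ) : Measurable (G x) := by
  unfold G
  refine Measurable.ite ((MeasurableSet.const _).inter measurableSet_Ioo) ?_ measurable_const
  fun_prop

lemma continuousAt_G_left {x₀ : ℝ} (hx₀ : x₀ ∈ Ioo (-1) 1) (hy : y ∈ Ioo (-1) 1)
    (hne : x₀ ≠ y) : ContinuousAt (fun x => G x y) x₀ := by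
  have hd : |x₀ - y| ≠ 0 := abs_ne_zero.2 (sub_ne_zero.2 hne)
  have hN := greenNumerator_pos hx₀ hy
  have hnum : Continuous (greenNumerator · y) := by unfold greenNumerator; fun_prop
  have hden : ContinuousAt (fun x => |x - y|) x₀ := by fun_prop
  have hformula : ContinuousAt (fun x => log (greenNumerator x y / |x - y|) / π) x₀ :=
    ((hnum.continuousAt.div hden hd).log (div_ne_zero hN.ne' hd)).div_const π
  refine hformula.congr ?_
  filter_upwards [isOpen_Ioo.mem_nhds hx₀] with x hx
  exact (G_of_mem hx hy).symm

end G

section weights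

variable {s : ℝ}

lemma intervalIntegrable_abs_sub_rpow (hs : -1 < s) (x a b : ℝ) :
    IntervalIntegrable (fun y => |x - y| ^ s) volume a b := by
  have hloc : LocallyIntegrable (fun t : ℝ => |t| ^ s) volume :=
    locallyIntegrable_of_norm_le_rpow (C := 1) (α := -s) (by simp) (by simp; linarith)
      (ae_of_all _ fun t => by simp [abs_rpow_of_nonneg (abs_nonneg t)])
      (by fun_prop : Measurable fun t : ℝ => |t| ^ s).aestronglyMeasurable
  have hshifted : IntervalIntegrable (fun t : ℝ => |t| ^ s) volume (x - a) (x - b) :=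
    (hloc.integrableOn_isCompact isCompact_uIcc).intervalIntegrable
  simpa using hshifted.comp_sub_left x

lemma integral_Ioo_abs_sub_rpow (hs : -1 < s) (x : ℝ) {a : ℝ} (ha : 0 ≤ a) :
    ∫ y in Ioo (x - a) (x + a), |x - y| ^ s = 2 * a ^ (s + 1) / (s + 1) := by
  have hint (c d : ℝ) := intervalIntegrable_abs_sub_rpow hs 0 c d
  simp only [zero_sub, abs_neg] at hint
  have hhalf : ∫ t in (0 : ℝ)..a, |t| ^ s = a ^ (s + 1) / (s + 1) := by
    rw [intervalIntegral.integral_congr (g := fun t => t ^ s) fun t ht => by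
        rw [uIcc_of_le ha] at ht; simp [abs_of_nonneg ht.1],
      integral_rpow (Or.inl hs), zero_rpow (by linarith), sub_zero]
  have hmirror : ∫ t in -a..0, |t| ^ s = ∫ t in (0 : ℝ)..a, |t| ^ s := by
    simpa using (intervalIntegral.integral_comp_neg (a := 0) (b := a) fun t => |t| ^ s).symm
  rw [← integral_Ioc_eq_integral_Ioo, ← intervalIntegral.integral_of_le (by linarith),
    intervalIntegral.integral_comp_sub_left (fun t => |t| ^ s) x, sub_add_cancel_left,
    sub_sub_cancel, ← intervalIntegral.integral_add_adjacent_intervals (hint _ 0) (hint 0 _),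
    hmirror, hhalf]
  ring

lemma one_sub_sq_rpow_le {y : ℝ} (hy : y ∈ Ioo (-1) 1) :
    (1 - y ^ 2) ^ s ≤ (1 - y) ^ s + (1 + y) ^ s := by
  obtain ⟨hy₁, hy₂⟩ := hy
  have hfactor : (1 - y ^ 2) ^ s = (1 - y) ^ s * (1 + y) ^ s := by
    rw [← mul_rpow (by linarith) (by linarith)]; ring_nf
  have hpos₁ : 0 ≤ (1 - y) ^ s := rpow_nonneg (by linarith) s
  have hpos₂ : 0 ≤ (1 + y) ^ s := rpow_nonneg (by linarith) s
  rcases le_total 0 s with hs | hs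
  · have : (1 - y ^ 2) ^ s ≤ 1 := rpow_le_one (by nlinarith) (by nlinarith) hs
    rcases le_total 0 y with h | h
    · linarith [one_le_rpow (show 1 ≤ 1 + y by linarith) hs]
    · linarith [one_le_rpow (show 1 ≤ 1 - y by linarith) hs]
  · rw [hfactor]
    rcases le_total 0 y with h | h
    · nlinarith [rpow_le_one_of_one_le_of_nonpos (show 1 ≤ 1 + y by linarith) hs]
    · nlinarith [rpow_le_one_of_one_le_of_nonpos (show 1 ≤ 1 - y by linarith) hs]

lemma integrableOn_one_sub_sq_rpow (hs : -1 < s) :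
    IntegrableOn (fun y : ℝ => (1 - y ^ 2) ^ s) (Ioo (-1) 1) := by
  have hrpow : IntervalIntegrable (fun t : ℝ => t ^ s) volume 0 2 :=
    intervalIntegral.intervalIntegrable_rpow' hs
  have hleft : IntegrableOn (fun y : ℝ => (1 - y) ^ s) (Ioo (-1) 1) := by
    rw [← intervalIntegrable_iff_integrableOn_Ioo_of_le (by norm_num)]
    simpa [show (1 : ℝ) - 2 = -1 by norm_num] using (hrpow.comp_sub_left 1).symm
  have hright : IntegrableOn (fun y : ℝ => (1 + y) ^ s) (Ioo (-1) 1) := by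
    rw [← intervalIntegrable_iff_integrableOn_Ioo_of_le (by norm_num)]
    simpa [add_comm, show (2 : ℝ) - 1 = 1 by norm_num] using hrpow.comp_add_right 1
  refine (hleft.add hright).mono'
    (by fun_prop : Measurable fun y : ℝ => (1 - y ^ 2) ^ s).aestronglyMeasurable ?_
  filter_upwards [ae_restrict_mem measurableSet_Ioo] with y hy
  rw [norm_of_nonneg (rpow_nonneg (by nlinarith [hy.1, hy.2]) s)]
  exact one_sub_sq_rpow_le hy

end weights

section estimates

variable {b C : ℝ} {f : ℝ → ℝ}

lemma integrableOn_log_three_add_rpow (x p q : ℝ) :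
    IntegrableOn (fun y => (log 3 + 2 * |x - y| ^ (-(1 / 2) : ℝ)) / π) (Ioo p q) := by
  refine Integrable.div_const ((integrableOn_const (C := log 3) measure_Ioo_lt_top.ne).add ?_) π
  exact ((intervalIntegrable_abs_sub_rpow (by norm_num) x _ _).def'.mono_set
    (Ioo_subset_Ioc_self.trans Ioc_subset_uIoc)).const_mul 2

lemma integral_log_three_add_rpow (x : ℝ) {r : ℝ} (hr : 0 ≤ r) :
    ∫ y in Ioo (x - r) (x + r), (log 3 + 2 * |x - y| ^ (-(1 / 2) : ℝ)) / π
      = (2 * r * log 3 + 8 * r ^ (1 / 2 : ℝ)) / π := by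
  have hsing := (intervalIntegrable_abs_sub_rpow (s := -(1 / 2)) (by norm_num) x
    (x - r) (x + r)).def'.mono_set (Ioo_subset_Ioc_self.trans Ioc_subset_uIoc)
  have hconst : IntegrableOn (fun _ => log 3) (Ioo (x - r) (x + r)) :=
    integrableOn_const measure_Ioo_lt_top.ne
  rw [integral_div, integral_add hconst (hsing.const_mul 2),
    setIntegral_const, integral_const_mul, integral_Ioo_abs_sub_rpow (by norm_num) x hr,
    volume_real_Ioo_of_le (by linarith), smul_eq_mul, show -(1 / 2 : ℝ) + 1 = 1 / 2 by norm_num]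
  ring

lemma integrableOn_G_mul_of_abs_le (hf : Measurable f) {x c r D : ℝ}
    (hD : ∀ y ∈ Ioo (c - r) (c + r), |f y| ≤ D) :
    IntegrableOn (fun y => G x y * f y) (Ioo (c - r) (c + r)) := by
  refine ((integrableOn_log_three_add_rpow x _ _).mul_const D).mono'
    ((measurable_G x).mul hf).aestronglyMeasurable ?_
  filter_upwards [ae_restrict_mem measurableSet_Ioo] with y hy
  rw [norm_mul, norm_of_nonneg (G_nonneg x y)]
  exact mul_le_mul (G_le_log_three_add_rpow x y) (hD y hy) (norm_nonneg _)
    ((G_nonneg x y).trans (G_le_log_three_add_rpow x y))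

lemma norm_setIntegral_G_mul_le {x c r D : ℝ} (hr : 0 < r)
    (hxc : |x - c| ≤ r) (hD : ∀ y ∈ Ioo (c - r) (c + r), |f y| ≤ D) :
    ‖∫ y in Ioo (c - r) (c + r), G x y * f y‖
      ≤ (4 * r * log 3 + 8 * (2 * r) ^ (1 / 2 : ℝ)) / π * D := by
  have hD₀ : 0 ≤ D := (abs_nonneg _).trans (hD c ⟨by linarith, by linarith⟩)
  have hkernel (p q : ℝ) := (integrableOn_log_three_add_rpow x p q).mul_const D
  have hkernel_nonneg (y : ℝ) : 0 ≤ (log 3 + 2 * |x - y| ^ (-(1 / 2) : ℝ)) / π * D :=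
    mul_nonneg ((G_nonneg x y).trans (G_le_log_three_add_rpow x y)) hD₀
  have hwindow : Ioo (c - r) (c + r) ⊆ Ioo (x - 2 * r) (x + 2 * r) := by
    rw [abs_le] at hxc
    exact Ioo_subset_Ioo (by linarith) (by linarith)
  calc ‖∫ y in Ioo (c - r) (c + r), G x y * f y‖
      ≤ ∫ y in Ioo (c - r) (c + r), (log 3 + 2 * |x - y| ^ (-(1 / 2) : ℝ)) / π * D := by
        refine norm_integral_le_of_norm_le (hkernel _ _) ?_
        filter_upwards [ae_restrict_mem measurableSet_Ioo] with y hy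
        rw [norm_mul, norm_of_nonneg (G_nonneg x y)]
        exact mul_le_mul (G_le_log_three_add_rpow x y) (hD y hy) (norm_nonneg _)
          ((G_nonneg x y).trans (G_le_log_three_add_rpow x y))
    _ ≤ ∫ y in Ioo (x - 2 * r) (x + 2 * r), (log 3 + 2 * |x - y| ^ (-(1 / 2) : ℝ)) / π * D :=
        setIntegral_mono_set (hkernel _ _) (ae_of_all _ hkernel_nonneg) hwindow.eventuallyLE
    _ = (4 * r * log 3 + 8 * (2 * r) ^ (1 / 2 : ℝ)) / π * D := by
        rw [integral_mul_const, integral_log_three_add_rpow x (by positivity)]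
        ring

lemma norm_G_mul_le_of_far (hbound : ∀ x ∈ Ioo (-1 : ℝ) 1, |f x| ≤ C * (1 - x ^ 2) ^ b)
    {x c r y : ℝ} (hr : 0 < r) (hxc : |x - c| ≤ r / 2)
    (hy : y ∈ Ioo (-1) 1 \ Ioo (c - r) (c + r)) :
    ‖G x y * f y‖ ≤ 6 / (π * r) * C * (1 - y ^ 2) ^ (b + 1 / 2) := by
  obtain ⟨hy, hy_far⟩ := hy
  have hyc : r ≤ |y - c| := by
    by_contra! h
    exact hy_far ⟨by linarith [(abs_lt.1 h).1], by linarith [(abs_lt.1 h).2]⟩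
  have hxy : r / 2 ≤ |x - y| := by
    linarith [abs_sub_le y x c, abs_sub_comm x y]
  have h1y : 0 < 1 - y ^ 2 := by nlinarith [hy.1, hy.2]
  have hfy := hbound y hy
  have hG : G x y ≤ 3 / π * √(1 - y ^ 2) / (r / 2) :=
    (G_le_sqrt_div x y).trans (by gcongr)
  calc ‖G x y * f y‖ = G x y * |f y| := by rw [norm_mul, norm_of_nonneg (G_nonneg x y), norm_eq_abs]
    _ ≤ 3 / π * √(1 - y ^ 2) / (r / 2) * (C * (1 - y ^ 2) ^ b) :=
        mul_le_mul hG hfy (abs_nonneg _) (by positivity)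
    _ = 6 / (π * r) * C * (√(1 - y ^ 2) * (1 - y ^ 2) ^ b) := by field_simp; ring
    _ = 6 / (π * r) * C * (1 - y ^ 2) ^ (b + 1 / 2) := by
        rw [sqrt_eq_rpow, ← rpow_add h1y, add_comm]

lemma integrableOn_G_mul_far (hb : -(3 / 2) < b) (hf : Measurable f)
    (hbound : ∀ x ∈ Ioo (-1 : ℝ) 1, |f x| ≤ C * (1 - x ^ 2) ^ b)
    {x c r : ℝ} (hr : 0 < r) (hxc : |x - c| ≤ r / 2) :
    IntegrableOn (fun y => G x y * f y) (Ioo (-1) 1 \ Ioo (c - r) (c + r)) := by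
  have hweight := (integrableOn_one_sub_sq_rpow (s := b + 1 / 2) (by linarith)).mono_set
    (sdiff_subset (t := Ioo (c - r) (c + r)))
  refine (hweight.const_mul (6 / (π * r) * C)).mono'
    ((measurable_G x).mul hf).aestronglyMeasurable ?_
  filter_upwards [ae_restrict_mem (measurableSet_Ioo.diff measurableSet_Ioo)] with y hy
  exact norm_G_mul_le_of_far hbound hr hxc hy

lemma continuousAt_setIntegral_G_mul_far (hb : -(3 / 2) < b) (hf : Measurable f)
    (hbound : ∀ x ∈ Ioo (-1 : ℝ) 1, |f x| ≤ C * (1 - x ^ 2) ^ b)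
    {x₀ r : ℝ} (hx₀ : x₀ ∈ Ioo (-1) 1) (hr : 0 < r) :
    ContinuousAt (fun x => ∫ y in Ioo (-1) 1 \ Ioo (x₀ - r) (x₀ + r), G x y * f y) x₀ := by
  have hweight := (integrableOn_one_sub_sq_rpow (s := b + 1 / 2) (by linarith)).mono_set
    (sdiff_subset (t := Ioo (x₀ - r) (x₀ + r)))
  refine continuousAt_of_dominated (bound := fun y => 6 / (π * r) * C * (1 - y ^ 2) ^ (b + 1 / 2))
    (.of_forall fun x => ((measurable_G x).mul hf).aestronglyMeasurable) ?_
    (hweight.const_mul _) ?_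
  · filter_upwards [Metric.closedBall_mem_nhds x₀ (half_pos hr)] with x hx
    filter_upwards [ae_restrict_mem (measurableSet_Ioo.diff measurableSet_Ioo)] with y hy
    exact norm_G_mul_le_of_far hbound hr (by rwa [Metric.mem_closedBall, dist_eq] at hx) hy
  · filter_upwards [ae_restrict_mem (measurableSet_Ioo.diff measurableSet_Ioo)] with y hy
    have hne : x₀ ≠ y := by
      rintro rfl
      exact hy.2 ⟨by linarith, by linarith⟩
    exact (continuousAt_G_left hx₀ hy.1 hne).mul continuousAt_const

lemma exists_window_abs_le (hbound : ∀ x ∈ Ioo (-1 : ℝ) 1, |f x| ≤ C * (1 - x ^ 2) ^ b)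
    {x₀ : ℝ} (hx₀ : x₀ ∈ Ioo (-1) 1) :
    ∃ r > 0, Ioo (x₀ - r) (x₀ + r) ⊆ Ioo (-1) 1 ∧ ∃ D, ∀ y ∈ Ioo (x₀ - r) (x₀ + r), |f y| ≤ D := by
  obtain ⟨r, hr, hball⟩ := Metric.nhds_basis_closedBall.mem_iff.1 (isOpen_Ioo.mem_nhds hx₀)
  rw [closedBall_eq_Icc] at hball
  have hweight : ContinuousOn (fun y => C * (1 - y ^ 2) ^ b) (Icc (x₀ - r) (x₀ + r)) := by
    have hbase : Continuous fun y : ℝ => 1 - y ^ 2 := by fun_prop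
    refine continuousOn_const.mul (hbase.continuousOn.rpow_const fun y hy => Or.inl ?_)
    have := hball hy
    nlinarith [this.1, this.2]
  obtain ⟨D, hD⟩ := isCompact_Icc.exists_bound_of_continuousOn hweight
  refine ⟨r, hr, Ioo_subset_Icc_self.trans hball, D, fun y hy => ?_⟩
  have hy' := Ioo_subset_Icc_self hy
  exact (hbound y (hball hy')).trans ((le_abs_self _).trans (hD y hy'))

lemma integrableOn_G_mul (hb : -(3 / 2) < b) (hf : Measurable f)
    (hbound : ∀ x ∈ Ioo (-1 : ℝ) 1, |f x| ≤ C * (1 - x ^ 2) ^ b)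
    {x : ℝ} (hx : x ∈ Ioo (-1) 1) :
    IntegrableOn (fun y => G x y * f y) (Ioo (-1) 1) := by
  obtain ⟨r, hr, hsub, D, hD⟩ := exists_window_abs_le hbound hx
  have := (integrableOn_G_mul_of_abs_le (x := x) hf hD).union
    (integrableOn_G_mul_far hb hf hbound hr (by rw [sub_self, abs_zero]; positivity))
  rwa [union_sdiff_cancel hsub] at this

lemma continuousAt_integral_G_mul (hb : -(3 / 2) < b) (hf : Measurable f)
    (hbound : ∀ x ∈ Ioo (-1 : ℝ) 1, |f x| ≤ C * (1 - x ^ 2) ^ b)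
    {x₀ : ℝ} (hx₀ : x₀ ∈ Ioo (-1) 1) :
    ContinuousAt (fun x => ∫ y in Ioo (-1) 1, G x y * f y) x₀ := by
  obtain ⟨r₀, hr₀, hsub, D, hD⟩ := exists_window_abs_le hbound hx₀
  refine continuousAt_of_locally_uniform_approx_of_continuousAt fun u hu => ?_
  obtain ⟨ε, hε, hεu⟩ := Metric.mem_uniformity_dist.1 hu
  have hsmall : Tendsto (fun r : ℝ => (4 * r * log 3 + 8 * (2 * r) ^ (1 / 2 : ℝ)) / π * D)
      (𝓝[>] 0) (𝓝 0) := by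
    have : Continuous fun r : ℝ => (4 * r * log 3 + 8 * (2 * r) ^ (1 / 2 : ℝ)) / π * D := by
      fun_prop (disch := norm_num)
    simpa using this.continuousWithinAt.tendsto (s := Ioi 0) (x := 0)
  obtain ⟨r, hrε, hr, hrr₀⟩ :=
    ((hsmall.eventually (gt_mem_nhds hε)).and (Ioc_mem_nhdsGT hr₀)).exists
  have hwindow : Ioo (x₀ - r) (x₀ + r) ⊆ Ioo (x₀ - r₀) (x₀ + r₀) :=
    Ioo_subset_Ioo (by linarith) (by linarith)
  refine ⟨Metric.ball x₀ (r / 2), Metric.ball_mem_nhds x₀ (half_pos hr), _,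
    continuousAt_setIntegral_G_mul_far hb hf hbound hx₀ hr, fun x hx => hεu ?_⟩
  rw [Metric.mem_ball, dist_eq] at hx
  have hx' : x ∈ Ioo (-1) 1 :=
    hsub (hwindow ⟨by linarith [(abs_lt.1 hx).1], by linarith [(abs_lt.1 hx).2]⟩)
  rw [dist_eq, ← integral_inter_add_sdiff measurableSet_Ioo (integrableOn_G_mul hb hf hbound hx'),
    inter_eq_right.2 (hwindow.trans hsub), add_sub_cancel_right]
  exact (norm_setIntegral_G_mul_le hr (by linarith) fun y hy => hD y (hwindow hy)).trans_lt hrε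

end estimates

theorem stmt_3_general (b : ℝ) (hb : b > -(3/2)) (f : ℝ → ℝ) (hf : Measurable f)
    (C : ℝ)
    (hbound : ∀ x ∈ Set.Ioo (-1:ℝ) 1, |f x| ≤ C * (1 - x^2) ^ b) :
    (∀ x ∈ Set.Ioo (-1:ℝ) 1,
      MeasureTheory.IntegrableOn (fun y => G x y * f y) (Set.Ioo (-1:ℝ) 1)) ∧
    ContinuousOn (fun x => ∫ y in Set.Ioo (-1:ℝ) 1, G x y * f y)
      (Set.Ioo (-1:ℝ) 1) :=
  ⟨fun _ hx => integrableOn_G_mul hb hf hbound hx,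
    fun _ hx => (continuousAt_integral_G_mul hb hf hbound hx).continuousWithinAt⟩

theorem stmt_3 (b : ℝ) (hb : b > -(3/2)) (f : ℝ → ℝ) (hf : Measurable f)
    (C : ℝ) (hC : 0 < C)
    (hbound : ∀ x ∈ Set.Ioo (-1:ℝ) 1, |f x| ≤ C * (1 - x^2) ^ b) :
    (∀ x ∈ Set.Ioo (-1:ℝ) 1,
      MeasureTheory.IntegrableOn (fun y => G x y * f y) (Set.Ioo (-1:ℝ) 1)) ∧
    ContinuousOn (fun x => ∫ y in Set.Ioo (-1:ℝ) 1, G x y * f y)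
      (Set.Ioo (-1:ℝ) 1) :=
  stmt_3_general b hb f hf C hbound
end

section
/- The function g extends to a continuous function on (-1,1)×(-1,1), and for all x, z ∈ (-1,1) with x ≠ z and x ≠ -z one has ∂g/∂x (x,z) = -(1/2)·[G(x,z) - G(x,-z)] = -(1/(2π))·argsinh( 2·x·z·√((1-x²)(1-z²)) / (|x-z|·|x+z|) ). In particular, for every z ∈ (0,1), the function x ↦ g(x,z) is decreasing on (0,1). -/
/-- The Green function `g(x,z)` for the operator `u ↦ (I u)'` on `(-1,1)`. -/
noncomputable def g (x z : ℝ) : ℝ :=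
  if x ∈ Set.Ioo (-1:ℝ) 1 then
    (1/2) * ((z - x) * G x z + (z + x) * G x (-z))
  else 0

/-!
Write `N(x,y)` for the numerator in `G` and `F(x,y) = (y - x) log N(x,y) - φ(y - x)` with
`φ t = t log t`, so that `π (y - x) G(x,y) = F(x,y)`. As `φ` is continuous at `0`, `F` is continuous
on the whole square, diagonal included, and so is `g(x,z) = (F(x,z) - F(x,-z)) / (2π)`.
In `x`, `∂ₓF(x,y) = (1 - y²)/√((1-x²)(1-y²)) - π G(x,y)`; the first term is even in `y`, so it
cancels in `g`. Next, `π (G(x,z) - G(x,-z)) = log w` with `w = N(x,z)|x+z| / (N(x,-z)|x-z|)`,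
and `sinh (log w) = (w - w⁻¹)/2` is the argument of `argsinh`. For `x, z > 0` it is positive, so
`g(·,z)` decreases strictly on both sides of `z` and, being continuous, on all of `(0,1)`.
-/

open Real Set Filter Topology

lemma strictAntiOn_Ioo_of_deriv_neg_of_ne {f : ℝ → ℝ} {a b c : ℝ} (hc : c ∈ Ioo a b)
    (hf : ContinuousOn f (Ioo a b)) (hf' : ∀ x ∈ Ioo a b, x ≠ c → deriv f x < 0) :
    StrictAntiOn f (Ioo a b) := by
  rw [← Ioc_union_Ico_eq_Ioo hc.1 hc.2]
  refine StrictAntiOn.union ?_ ?_ (isGreatest_Ioc hc.1) (isLeast_Ico hc.2)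
  · refine strictAntiOn_of_deriv_neg (convex_Ioc a c) (hf.mono (Ioc_subset_Ioo_right hc.2))
      fun x hx => ?_
    rw [interior_Ioc] at hx
    exact hf' x ⟨hx.1, hx.2.trans hc.2⟩ hx.2.ne
  · refine strictAntiOn_of_deriv_neg (convex_Ico c b) (hf.mono (Ico_subset_Ioo_left hc.1))
      fun x hx => ?_
    rw [interior_Ico] at hx
    exact hf' x ⟨hc.1.trans hx.1, hx.2⟩ hx.1.ne'

noncomputable def greenNum (x y : ℝ) : ℝ := 1 - x * y + √((1 - x ^ 2) * (1 - y ^ 2))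

noncomputable def scaledGreen (x y : ℝ) : ℝ :=
  (y - x) * log (greenNum x y) - (y - x) * log (y - x)

section

variable {x y z : ℝ}

lemma neg_mem_Ioo_neg_one_one (hz : z ∈ Ioo (-1 : ℝ) 1) : -z ∈ Ioo (-1 : ℝ) 1 :=
  ⟨neg_lt_neg hz.2, by linarith [hz.1]⟩

lemma one_sub_sq_pos (hx : x ∈ Ioo (-1 : ℝ) 1) : 0 < 1 - x ^ 2 := by
  nlinarith [hx.1, hx.2]

lemma greenNum_pos (hx : x ∈ Ioo (-1 : ℝ) 1) (hy : y ∈ Ioo (-1 : ℝ) 1) : 0 < greenNum x y := by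
  have : 0 < 1 - x * y := by
    nlinarith [mul_pos (sub_pos.2 hx.2) (neg_lt_iff_pos_add.1 hy.1),
      mul_pos (neg_lt_iff_pos_add.1 hx.1) (sub_pos.2 hy.2)]
  unfold greenNum
  positivity

lemma G_eq (hx : x ∈ Ioo (-1 : ℝ) 1) (hy : y ∈ Ioo (-1 : ℝ) 1) :
    G x y = log (greenNum x y / |x - y|) / π := by
  rw [G, if_pos ⟨hx, hy⟩, greenNum, one_div_mul_eq_div]

lemma G_eq_of_ne (hx : x ∈ Ioo (-1 : ℝ) 1) (hy : y ∈ Ioo (-1 : ℝ) 1) (hxy : x ≠ y) :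
    G x y = (log (greenNum x y) - log (y - x)) / π := by
  rw [G_eq hx hy, log_div (greenNum_pos hx hy).ne' (abs_pos.2 (sub_ne_zero.2 hxy)).ne',
    abs_sub_comm, log_abs]

lemma sub_mul_G (hx : x ∈ Ioo (-1 : ℝ) 1) (hy : y ∈ Ioo (-1 : ℝ) 1) :
    (y - x) * G x y = scaledGreen x y / π := by
  rcases eq_or_ne x y with rfl | hxy
  · simp [scaledGreen]
  · rw [G_eq_of_ne hx hy hxy, scaledGreen]
    ring

lemma g_eq (hx : x ∈ Ioo (-1 : ℝ) 1) (hz : z ∈ Ioo (-1 : ℝ) 1) :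
    g x z = (scaledGreen x z - scaledGreen x (-z)) / (2 * π) := by
  rw [g, if_pos hx]
  linear_combination
    (1 / 2) * sub_mul_G hx hz - (1 / 2) * sub_mul_G hx (neg_mem_Ioo_neg_one_one hz)

lemma continuousOn_scaledGreen :
    ContinuousOn (fun p : ℝ × ℝ => scaledGreen p.1 p.2) (Ioo (-1 : ℝ) 1 ×ˢ Ioo (-1 : ℝ) 1) := by
  have hlog : ContinuousOn (fun p : ℝ × ℝ => log (greenNum p.1 p.2))
      (Ioo (-1 : ℝ) 1 ×ˢ Ioo (-1 : ℝ) 1) :=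
    ContinuousOn.log (by unfold greenNum; fun_prop) fun p hp => (greenNum_pos hp.1 hp.2).ne'
  exact ((continuous_snd.sub continuous_fst).continuousOn.mul hlog).sub
    (continuous_mul_log.comp (continuous_snd.sub continuous_fst)).continuousOn

lemma continuousOn_g :
    ContinuousOn (fun p : ℝ × ℝ => g p.1 p.2) (Ioo (-1 : ℝ) 1 ×ˢ Ioo (-1 : ℝ) 1) := by
  have hF := continuousOn_scaledGreen
  have hreflect : MapsTo (fun p : ℝ × ℝ => (p.1, -p.2)) (Ioo (-1 : ℝ) 1 ×ˢ Ioo (-1 : ℝ) 1)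
      (Ioo (-1 : ℝ) 1 ×ˢ Ioo (-1 : ℝ) 1) :=
    fun p hp => ⟨hp.1, neg_mem_Ioo_neg_one_one hp.2⟩
  exact ((hF.sub (hF.comp (by fun_prop) hreflect)).div_const (2 * π)).congr
    fun p hp => g_eq hp.1 hp.2

lemma hasDerivAt_greenNum (hx : x ∈ Ioo (-1 : ℝ) 1) (hy : y ∈ Ioo (-1 : ℝ) 1) :
    HasDerivAt (fun t => greenNum t y)
      (-y - x * (1 - y ^ 2) / √((1 - x ^ 2) * (1 - y ^ 2))) x := by
  have hv := mul_pos (one_sub_sq_pos hx) (one_sub_sq_pos hy)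
  refine ((((hasDerivAt_id x).mul_const y).const_sub 1).add
    ((((hasDerivAt_pow 2 x).const_sub 1).mul_const (1 - y ^ 2)).sqrt hv.ne')).congr_deriv ?_
  field_simp
  ring

lemma hasDerivAt_scaledGreen (hx : x ∈ Ioo (-1 : ℝ) 1) (hy : y ∈ Ioo (-1 : ℝ) 1) (hxy : x ≠ y) :
    HasDerivAt (fun t => scaledGreen t y)
      ((1 - y ^ 2) / √((1 - x ^ 2) * (1 - y ^ 2)) - π * G x y) x := by
  have hc : HasDerivAt (fun t => y - t) (-1) x := (hasDerivAt_id x).const_sub y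
  have hA := greenNum_pos hx hy
  refine ((hc.mul ((hasDerivAt_greenNum hx hy).log hA.ne')).sub
    ((hasDerivAt_mul_log (sub_ne_zero.2 hxy.symm)).comp x hc)).congr_deriv ?_
  have hv := mul_pos (one_sub_sq_pos hx) (one_sub_sq_pos hy)
  set s := √((1 - x ^ 2) * (1 - y ^ 2))
  have hs2 : s ^ 2 = (1 - x ^ 2) * (1 - y ^ 2) := sq_sqrt hv.le
  have hs0 : 0 < s := sqrt_pos.2 hv
  have hkey : (y - x) * ((-y - x * (1 - y ^ 2) / s) / greenNum x y) + 1 = (1 - y ^ 2) / s := by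
    field_simp
    rw [show greenNum x y = 1 - x * y + s from rfl]
    linear_combination hs2
  rw [G_eq_of_ne hx hy hxy, ← hkey]
  field_simp
  ring

lemma hasDerivAt_g (hx : x ∈ Ioo (-1 : ℝ) 1) (hz : z ∈ Ioo (-1 : ℝ) 1) (hxz : x ≠ z)
    (hxz' : x ≠ -z) :
    HasDerivAt (fun t => g t z) (-(1 / 2) * (G x z - G x (-z))) x := by
  have hF := ((hasDerivAt_scaledGreen hx hz hxz).sub
    (hasDerivAt_scaledGreen hx (neg_mem_Ioo_neg_one_one hz) hxz')).div_const (2 * π)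
  have hg : (fun t => g t z) =ᶠ[𝓝 x]
      fun t => (scaledGreen t z - scaledGreen t (-z)) / (2 * π) := by
    filter_upwards [Ioo_mem_nhds hx.1 hx.2] with t ht using g_eq ht hz
  refine (hF.congr_of_eventuallyEq hg).congr_deriv ?_
  rw [neg_sq]
  field_simp
  ring

lemma G_sub_G_neg (hx : x ∈ Ioo (-1 : ℝ) 1) (hz : z ∈ Ioo (-1 : ℝ) 1) (hxz : x ≠ z)
    (hxz' : x ≠ -z) :
    G x z - G x (-z) =
      arsinh (2 * x * z * √((1 - x ^ 2) * (1 - z ^ 2)) / (|x - z| * |x + z|)) / π := by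
  have hz' := neg_mem_Ioo_neg_one_one hz
  have hA := greenNum_pos hx hz
  have hB := greenNum_pos hx hz'
  have hd : 0 < |x - z| := abs_pos.2 (sub_ne_zero.2 hxz)
  have hd' : 0 < |x + z| := abs_pos.2 (by rwa [← sub_neg_eq_add, sub_ne_zero])
  have hw : 0 < greenNum x z / |x - z| / (greenNum x (-z) / |x + z|) := by positivity
  have hsinh : sinh (log (greenNum x z / |x - z| / (greenNum x (-z) / |x + z|))) =
      2 * x * z * √((1 - x ^ 2) * (1 - z ^ 2)) / (|x - z| * |x + z|) := by
    have hv := mul_pos (one_sub_sq_pos hx) (one_sub_sq_pos hz)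
    set s := √((1 - x ^ 2) * (1 - z ^ 2))
    have hs2 : s ^ 2 = (1 - x ^ 2) * (1 - z ^ 2) := sq_sqrt hv.le
    have hA' : greenNum x z = 1 - x * z + s := rfl
    have hB' : greenNum x (-z) = 1 + x * z + s := by rw [greenNum, neg_sq]; ring
    rw [sinh_log hw]
    -- modulo `s² = (1-x²)(1-z²)`: `(N(x,z)(x+z))² - (N(x,-z)(x-z))² = 4xzs N(x,z) N(x,-z)`
    field_simp
    rw [hA', hB']
    linear_combination (1 - x * z + s) ^ 2 * sq_abs (x + z) - (1 + x * z + s) ^ 2 * sq_abs (x - z)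
      - 4 * x * z * (1 + s) * hs2
  rw [G_eq hx hz, G_eq hx hz', sub_neg_eq_add, ← sub_div, ← log_div (by positivity) (by positivity),
    ← hsinh, arsinh_sinh]

lemma G_neg_lt_G (hx : x ∈ Ioo (0 : ℝ) 1) (hz : z ∈ Ioo (0 : ℝ) 1) (hxz : x ≠ z) :
    G x (-z) < G x z := by
  have hsub : Ioo (0 : ℝ) 1 ⊆ Ioo (-1) 1 := Ioo_subset_Ioo_left (by norm_num)
  have hv := mul_pos (one_sub_sq_pos (hsub hx)) (one_sub_sq_pos (hsub hz))
  have hu : 0 < 2 * x * z * √((1 - x ^ 2) * (1 - z ^ 2)) / (|x - z| * |x + z|) :=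
    div_pos (mul_pos (mul_pos (mul_pos two_pos hx.1) hz.1) (sqrt_pos.2 hv))
      (mul_pos (abs_pos.2 (sub_ne_zero.2 hxz)) (abs_pos.2 (add_pos hx.1 hz.1).ne'))
  rw [← sub_pos, G_sub_G_neg (hsub hx) (hsub hz) hxz (by linarith [hx.1, hz.1])]
  exact div_pos (arsinh_pos_iff.2 hu) pi_pos

end

lemma strictAntiOn_g {z : ℝ} (hz : z ∈ Ioo (0 : ℝ) 1) :
    StrictAntiOn (fun x => g x z) (Ioo (0 : ℝ) 1) := by
  have hsub : Ioo (0 : ℝ) 1 ⊆ Ioo (-1) 1 := Ioo_subset_Ioo_left (by norm_num)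
  have hcont : ContinuousOn (fun x => g x z) (Ioo (0 : ℝ) 1) :=
    continuousOn_g.comp (continuous_id.prodMk continuous_const).continuousOn
      fun x hx => ⟨hsub hx, hsub hz⟩
  refine strictAntiOn_Ioo_of_deriv_neg_of_ne hz hcont fun x hx hxz => ?_
  rw [(hasDerivAt_g (hsub hx) (hsub hz) hxz (by linarith [hx.1, hz.1])).deriv]
  linarith [G_neg_lt_G hx hz hxz]

theorem stmt_4 :
    ContinuousOn (fun p : ℝ × ℝ => g p.1 p.2)
      (Set.Ioo (-1:ℝ) 1 ×ˢ Set.Ioo (-1:ℝ) 1) ∧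
    (∀ x ∈ Set.Ioo (-1:ℝ) 1, ∀ z ∈ Set.Ioo (-1:ℝ) 1, x ≠ z → x ≠ -z →
      HasDerivAt (fun t => g t z) (-(1/2) * (G x z - G x (-z))) x ∧
      -(1/2) * (G x z - G x (-z)) =
        -(1 / (2 * Real.pi)) * Real.arsinh
          (2 * x * z * Real.sqrt ((1 - x^2) * (1 - z^2)) / (|x - z| * |x + z|))) ∧
    (∀ z ∈ Set.Ioo (0:ℝ) 1, StrictAntiOn (fun x => g x z) (Set.Ioo (0:ℝ) 1)) := by
  refine ⟨continuousOn_g, fun x hx z hz hxz hxz' => ⟨hasDerivAt_g hx hz hxz hxz', ?_⟩,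
    fun z hz => strictAntiOn_g hz⟩
  rw [G_sub_G_neg hx hz hxz hxz']
  ring
end

section
/- For all (x,z) ∈ ℝ² one has g(x,-z) = -g(x,z) and g(-x,z) = g(x,z), i.e. z ↦ g(x,z) is odd and x ↦ g(x,z) is even. Moreover g(x,z) > 0 for all x ∈ (-1,1) and all z ∈ (0,1) (and consequently g(x,z) < 0 for all x ∈ (-1,1) and all z ∈ (-1,0)). -/
open Real Set

theorem Real.strictConcaveOn_arsinh : StrictConcaveOn ℝ (Ici 0) arsinh := by
  have hderiv : deriv arsinh = fun x => (√(1 + x ^ 2))⁻¹ :=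
    funext fun x => (hasDerivAt_arsinh x).deriv
  refine StrictAntiOn.strictConcaveOn_of_deriv (convex_Ici 0) continuous_arsinh.continuousOn ?_
  rw [hderiv, interior_Ici]
  intro x hx y _ hxy
  have hx0 : 0 < x := hx
  have : √(1 + x ^ 2) < √(1 + y ^ 2) :=
    sqrt_lt_sqrt (by positivity) (by nlinarith)
  exact inv_strictAnti₀ (by positivity) this

noncomputable def scaledArsinh (s u : ℝ) : ℝ := u * arsinh (s / |u|)

theorem scaledArsinh_neg (s u : ℝ) : scaledArsinh s (-u) = -scaledArsinh s u := by
  simp only [scaledArsinh, abs_neg, neg_mul]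

theorem scaledArsinh_strictMonoOn_Ici {s : ℝ} (hs : 0 < s) :
    StrictMonoOn (scaledArsinh s) (Ici 0) := by
  intro u (hu : 0 ≤ u) v (hv : 0 ≤ v) huv
  have hv0 : 0 < v := hu.trans_lt huv
  rcases hu.eq_or_lt with rfl | hu0
  · simpa [scaledArsinh, abs_of_pos hv0] using mul_pos hv0 (arsinh_pos_iff.2 (div_pos hs hv0))
  -- `u ↦ u arsinh (s/u)` is `s` times the slope of `arsinh` on `[0, s/u]`, which decreases in `s/u`.
  have hslope := strictConcaveOn_arsinh.secant_strict_mono (a := 0) (x := s / v) (y := s / u)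
    self_mem_Ici (div_pos hs hv0).le (div_pos hs hu0).le (div_pos hs hv0).ne'
    (div_pos hs hu0).ne' (div_lt_div_of_pos_left hs hu0 huv)
  simp only [arsinh_zero, sub_zero] at hslope
  have key : ∀ w, 0 < w → scaledArsinh s w = s * (arsinh (s / w) / (s / w)) := by
    intro w hw
    rw [scaledArsinh, abs_of_pos hw]
    field_simp
  rw [key u hu0, key v hv0]
  exact mul_lt_mul_of_pos_left hslope hs

theorem scaledArsinh_strictMono {s : ℝ} (hs : 0 < s) : StrictMono (scaledArsinh s) :=
  strictMono_of_odd_strictMonoOn_nonneg (scaledArsinh_neg s) (scaledArsinh_strictMonoOn_Ici hs)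

theorem G_eq_arsinh {x y : ℝ} (hx : x ∈ Ioo (-1 : ℝ) 1) (hy : y ∈ Ioo (-1 : ℝ) 1) :
    G x y = arsinh (√((1 - x ^ 2) * (1 - y ^ 2)) / |x - y|) / π := by
  rw [G, if_pos ⟨hx, hy⟩, one_div_mul_eq_div]
  congr 1
  -- At `x = y` both sides vanish, as division by zero gives `0` inside `log` and `arsinh`.
  rcases eq_or_ne x y with rfl | hxy
  · simp
  obtain ⟨hx1, hx2⟩ := hx
  obtain ⟨hy1, hy2⟩ := hy
  set s := √((1 - x ^ 2) * (1 - y ^ 2))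
  set d := |x - y|
  have hd : 0 < d := abs_pos.2 (sub_ne_zero.2 hxy)
  have hs2 : s ^ 2 = (1 - x ^ 2) * (1 - y ^ 2) := sq_sqrt (mul_nonneg (by nlinarith) (by nlinarith))
  have hd2 : d ^ 2 = (x - y) ^ 2 := sq_abs _
  have hpyth : 1 + (s / d) ^ 2 = ((1 - x * y) / d) ^ 2 := by
    field_simp
    rw [hs2, hd2]
    ring
  rw [arsinh, hpyth, sqrt_sq (div_nonneg (by nlinarith) hd.le), ← add_div, add_comm s]

theorem g_eq_scaledArsinh {x z : ℝ} (hx : x ∈ Ioo (-1 : ℝ) 1) (hz : z ∈ Ioo (-1 : ℝ) 1) :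
    g x z = (scaledArsinh (√((1 - x ^ 2) * (1 - z ^ 2))) (z - x) +
      scaledArsinh (√((1 - x ^ 2) * (1 - z ^ 2))) (z + x)) / (2 * π) := by
  have hnz : -z ∈ Ioo (-1 : ℝ) 1 := ⟨by linarith [hz.2], by linarith [hz.1]⟩
  rw [g, if_pos hx, G_eq_arsinh hx hz, G_eq_arsinh hx hnz, scaledArsinh, scaledArsinh, neg_sq,
    abs_sub_comm, sub_neg_eq_add, add_comm x z]
  ring

theorem g_pos {x z : ℝ} (hx : x ∈ Ioo (-1 : ℝ) 1) (hz : z ∈ Ioo (0 : ℝ) 1) : 0 < g x z := by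
  have hz' : z ∈ Ioo (-1 : ℝ) 1 := ⟨by linarith [hz.1], hz.2⟩
  have hs : 0 < √((1 - x ^ 2) * (1 - z ^ 2)) := by
    obtain ⟨hx1, hx2⟩ := hx
    obtain ⟨hz1, hz2⟩ := hz'
    exact sqrt_pos.2 (mul_pos (by nlinarith) (by nlinarith))
  have hlt := scaledArsinh_strictMono hs (show x - z < z + x by linarith [hz.1])
  rw [← neg_sub z x, scaledArsinh_neg] at hlt
  rw [g_eq_scaledArsinh hx hz']
  exact div_pos (by linarith) (by positivity)

theorem G_neg_left (x y : ℝ) : G (-x) y = G x (-y) := by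
  simp only [G, neg_mem_Ioo_iff, neg_neg, neg_sq, neg_mul, mul_neg, show -x - y = -(x - -y) by ring,
    abs_neg]

theorem g_neg_right (x z : ℝ) : g x (-z) = -g x z := by
  simp only [g, neg_neg]
  split_ifs <;> ring

theorem g_neg_left (x z : ℝ) : g (-x) z = g x z := by
  simp only [g, neg_mem_Ioo_iff, neg_neg, G_neg_left]
  split_ifs <;> ring

theorem stmt_5 :
    (∀ x z : ℝ, g x (-z) = - g x z) ∧
    (∀ x z : ℝ, g (-x) z = g x z) ∧
    (∀ x ∈ Set.Ioo (-1:ℝ) 1, ∀ z ∈ Set.Ioo (0:ℝ) 1, 0 < g x z) ∧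
    (∀ x ∈ Set.Ioo (-1:ℝ) 1, ∀ z ∈ Set.Ioo (-1:ℝ) 0, g x z < 0) := by
  refine ⟨g_neg_right, g_neg_left, fun x hx z hz => g_pos hx hz, fun x hx z hz => ?_⟩
  have := g_pos hx (show -z ∈ Ioo (0 : ℝ) 1 from ⟨by linarith [hz.2], by linarith [hz.1]⟩)
  rwa [g_neg_right, neg_pos] at this
end
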